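/- arXiv:2512.19404 — 3 statements merged into one kernel-verified Lean document; each statement's English description precedes it below -/
import Mathlib

section
/- All eigenvalues of the Lanzhou matrix of a graph Γ on n vertices are zero if and only if Γ is the complete graph K_n or the empty graph on n vertices. -/
open Matrix BigOperators Finset

def lanzhouMatrix {V : Type*} [Fintype V] (G : SimpleGraph V) [DecidableRel G.Adj] :
    Matrix V V ℝ := fun u v =>
  if G.Adj u v then
    (G.degree u : ℝ) * ((Fintype.card V : ℝ) - 1 - (G.degree u : ℝ))
      + (G.degree v : ℝ) * ((Fintype.card V : ℝ) - 1 - (G.degree v : ℝ))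
  else 0

theorem lanzhouMatrix_isHermitian {V : Type*} [Fintype V] (G : SimpleGraph V)
    [DecidableRel G.Adj] : (lanzhouMatrix G).IsHermitian := by
  ext i j
  simp only [lanzhouMatrix, conjTranspose_apply, star_trivial]
  by_cases h : G.Adj i j
  · rw [if_pos (G.adj_symm h), if_pos h]; ring
  · rw [if_neg (fun h' => h (G.adj_symm h')), if_neg h]

/-
On an edge `uv` the entry is `w(u) + w(v)` with `w(x) = d(x) (n - 1 - d(x)) ≥ 0`, and `w(x) = 0`
exactly when `x` is isolated or universal. Since the endpoints of an edge are not isolated, the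
matrix vanishes iff every non-isolated vertex is universal; one universal vertex makes every other
vertex non-isolated, so this happens only for `K_n` and the empty graph. A Hermitian matrix is zero
iff all its eigenvalues are.
-/

namespace SimpleGraph

lemma forall_adj_isUniversal_iff {V : Type*} (G : SimpleGraph V) :
    (∀ u v, G.Adj u v → G.IsUniversal u) ↔ G = ⊤ ∨ G = ⊥ := by
  constructor
  · intro h
    refine or_iff_not_imp_right.mpr fun hG => ?_
    obtain ⟨a, b, hab⟩ := G.ne_bot_iff_exists_adj.mp hG
    refine G.eq_top_iff_forall_isUniversal.mpr fun v => ?_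
    by_cases hva : v = a
    · exact hva ▸ h a b hab
    · exact h v a (h a b hab (Ne.symm hva)).symm
  · rintro (rfl | rfl) u v huv
    · exact IsUniversal.top
    · exact huv.elim

variable {V : Type*} [Fintype V] (G : SimpleGraph V) [DecidableRel G.Adj]

lemma degree_le_card_sub_one (v : V) : G.degree v ≤ Fintype.card V - 1 :=
  Nat.le_sub_one_of_lt (G.degree_lt_card_verts v)

lemma degree_mul_card_sub_one_sub_degree_eq_zero_iff (v : V) :
    G.degree v * (Fintype.card V - 1 - G.degree v) = 0 ↔ G.degree v = 0 ∨ G.IsUniversal v := by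
  rw [mul_eq_zero, Nat.sub_eq_zero_iff_le, ← degree_eq_card_sub_one]
  have := G.degree_le_card_sub_one v
  omega

end SimpleGraph

section Lanzhou

variable {V : Type*} [Fintype V] (G : SimpleGraph V) [DecidableRel G.Adj]

-- The natural subtraction below does not truncate, since `d ≤ n - 1`.
lemma lanzhouMatrix_apply_of_adj {u v : V} (h : G.Adj u v) :
    lanzhouMatrix G u v = ((G.degree u * (Fintype.card V - 1 - G.degree u)
      + G.degree v * (Fintype.card V - 1 - G.degree v) : ℕ) : ℝ) := by
  have hcard : 1 ≤ Fintype.card V := Fintype.card_pos_iff.mpr ⟨u⟩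
  rw [lanzhouMatrix, if_pos h]
  push_cast [Nat.cast_sub hcard, Nat.cast_sub (G.degree_le_card_sub_one u),
    Nat.cast_sub (G.degree_le_card_sub_one v)]
  ring

lemma lanzhouMatrix_eq_zero_iff :
    lanzhouMatrix G = 0 ↔ ∀ u v, G.Adj u v → G.IsUniversal u := by
  constructor
  · intro h u v huv
    have huv0 := congrFun (congrFun h u) v
    rw [lanzhouMatrix_apply_of_adj G huv, Matrix.zero_apply, Nat.cast_eq_zero,
      Nat.add_eq_zero_iff] at huv0
    exact ((G.degree_mul_card_sub_one_sub_degree_eq_zero_iff u).mp huv0.1).resolve_left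
      huv.degree_pos_left.ne'
  · intro h
    ext u v
    by_cases huv : G.Adj u v
    · have hu := (G.degree_mul_card_sub_one_sub_degree_eq_zero_iff u).mpr (.inr (h u v huv))
      have hv := (G.degree_mul_card_sub_one_sub_degree_eq_zero_iff v).mpr (.inr (h v u huv.symm))
      rw [lanzhouMatrix_apply_of_adj G huv, hu, hv, Matrix.zero_apply, Nat.cast_zero]
    · rw [lanzhouMatrix, if_neg huv, Matrix.zero_apply]

end Lanzhou

/-- all Lanzhou eigenvalues are zero iff Γ is complete or empty. -/
theorem lanzhou_eigenvalues_all_zero_iff {V : Type*} [Fintype V] [DecidableEq V]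
    (G : SimpleGraph V) [DecidableRel G.Adj] :
    (∀ i, (lanzhouMatrix_isHermitian G).eigenvalues i = 0) ↔ G = ⊤ ∨ G = ⊥ := by
  rw [← G.forall_adj_isUniversal_iff, ← lanzhouMatrix_eq_zero_iff,
    ← (lanzhouMatrix_isHermitian G).eigenvalues_eq_zero_iff, funext_iff]
  rfl
end

section
/- The Lanzhou energy of a graph Γ on n vertices is zero if and only if Γ is the complete graph or the empty graph. -/
open Matrix BigOperators Finset

/-!
A Hermitian matrix has energy zero exactly when it is zero. On an edge `uv` the Lanzhou entry is
the sum of the two nonnegative terms `d(w)(n - 1 - d(w))`, `w = u, v`, and such a term vanishes at a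
non-isolated vertex only if that vertex is universal. So the matrix vanishes iff every
non-isolated vertex is universal, and a single universal vertex leaves no vertex isolated.
-/

theorem Matrix.IsHermitian.sum_abs_eigenvalues_eq_zero_iff {n 𝕜 : Type*} [Fintype n]
    [DecidableEq n] [RCLike 𝕜] {A : Matrix n n 𝕜} (hA : A.IsHermitian) :
    ∑ i, |hA.eigenvalues i| = 0 ↔ A = 0 := by
  rw [← hA.eigenvalues_eq_zero_iff, Finset.sum_eq_zero_iff_of_nonneg fun i _ ↦ abs_nonneg _,
    funext_iff]
  simp only [Finset.mem_univ, true_implies, abs_eq_zero, Pi.zero_apply]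

namespace SimpleGraph

theorem eq_top_or_eq_bot_of_forall_adj_isUniversal {V : Type*} {G : SimpleGraph V}
    (h : ∀ u v, G.Adj u v → G.IsUniversal u) : G = ⊤ ∨ G = ⊥ := by
  refine or_iff_not_imp_right.mpr fun hG ↦ G.eq_top_iff_forall_isUniversal.mpr fun w ↦ ?_
  obtain ⟨u, v, huv⟩ := ne_bot_iff_exists_adj.mp hG
  by_cases hwu : w = u
  · exact hwu ▸ h u v huv
  · exact h w u (h u v huv (Ne.symm hwu)).symm

variable {V : Type*} [Fintype V] (G : SimpleGraph V) [DecidableRel G.Adj]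

theorem degree_mul_card_sub_one_sub_degree_nonneg (v : V) :
    0 ≤ (G.degree v : ℝ) * ((Fintype.card V : ℝ) - 1 - (G.degree v : ℝ)) := by
  have hlt : (G.degree v : ℝ) + 1 ≤ Fintype.card V := by exact_mod_cast G.degree_lt_card_verts v
  exact mul_nonneg (Nat.cast_nonneg _) (by linarith)

variable {G}

theorem IsUniversal.card_sub_one_sub_degree_eq_zero {v : V} (hv : G.IsUniversal v) :
    (Fintype.card V : ℝ) - 1 - (G.degree v : ℝ) = 0 := by
  have hcard : 1 ≤ Fintype.card V := Fintype.card_pos_iff.mpr ⟨v⟩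
  rw [(G.degree_eq_card_sub_one v).mpr hv, Nat.cast_sub hcard, Nat.cast_one, sub_self]

theorem isUniversal_of_adj_of_degree_mul_card_sub_one_sub_degree_eq_zero {u v : V}
    (huv : G.Adj u v)
    (h : (G.degree u : ℝ) * ((Fintype.card V : ℝ) - 1 - (G.degree u : ℝ)) = 0) :
    G.IsUniversal u := by
  have hdeg : (G.degree u : ℝ) ≠ 0 :=
    Nat.cast_ne_zero.mpr ((G.degree_pos_iff_exists_adj u).mpr ⟨v, huv⟩).ne'
  have hcard : 1 ≤ Fintype.card V := Fintype.card_pos_iff.mpr ⟨u⟩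
  rw [← G.degree_eq_card_sub_one]
  exact_mod_cast (by linarith [(mul_eq_zero.mp h).resolve_left hdeg] :
    (G.degree u : ℝ) = (Fintype.card V : ℝ) - 1)

end SimpleGraph

theorem lanzhouMatrix_eq_zero_iff_s7 {V : Type*} [Fintype V] (G : SimpleGraph V)
    [DecidableRel G.Adj] : lanzhouMatrix G = 0 ↔ G = ⊤ ∨ G = ⊥ := by
  constructor
  · refine fun h ↦ SimpleGraph.eq_top_or_eq_bot_of_forall_adj_isUniversal fun u v huv ↦ ?_
    have hentry : lanzhouMatrix G u v = 0 := by rw [h, Matrix.zero_apply]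
    rw [lanzhouMatrix, if_pos huv] at hentry
    exact SimpleGraph.isUniversal_of_adj_of_degree_mul_card_sub_one_sub_degree_eq_zero huv
      ((add_eq_zero_iff_of_nonneg (G.degree_mul_card_sub_one_sub_degree_nonneg u)
        (G.degree_mul_card_sub_one_sub_degree_nonneg v)).mp hentry).1
  · rintro (rfl | rfl) <;> ext u v
    · simp only [lanzhouMatrix, Matrix.zero_apply,
        SimpleGraph.IsUniversal.top.card_sub_one_sub_degree_eq_zero, mul_zero, add_zero, ite_self]
    · simp only [lanzhouMatrix, Matrix.zero_apply, SimpleGraph.bot_adj, if_false]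

/-- the Lanzhou energy is zero iff Γ is complete or empty. -/
theorem lanzhou_energy_eq_zero_iff {V : Type*} [Fintype V] [DecidableEq V]
    (G : SimpleGraph V) [DecidableRel G.Adj] :
    (∑ i, |(lanzhouMatrix_isHermitian G).eigenvalues i| = 0) ↔ G = ⊤ ∨ G = ⊥ := by
  rw [(lanzhouMatrix_isHermitian G).sum_abs_eigenvalues_eq_zero_iff, lanzhouMatrix_eq_zero_iff_s7]
end

section
/- The Lanzhou spectrum of the crown graph S_n^0 (the complete bipartite graph K_{n,n} minus a perfect matching) consists of the eigenvalues a(n-1), a, -a, -a(n-1) with multiplicities 1, n-1, n-1, 1 respectively, where a = 2n(n-1); in particular its inertia is (n, n, 0) for n ≥ 2. -/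
open Matrix BigOperators Finset

/-- The crown graph S_n^0: vertices (i, a) with i : Fin n, a : Fin 2; two vertices are
adjacent iff they lie in different parts (different second coordinate) and i ≠ j.
This is K_{n,n} minus a perfect matching. -/
def crownGraph (n : ℕ) : SimpleGraph (Fin n × Fin 2) where
  Adj x y := x.2 ≠ y.2 ∧ x.1 ≠ y.1
  symm := ⟨fun x y h => ⟨h.1.symm, h.2.symm⟩⟩
  loopless := ⟨fun x h => h.1 rfl⟩

instance (n : ℕ) : DecidableRel (crownGraph n).Adj := fun _ _ =>
  inferInstanceAs (Decidable (_ ∧ _))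

/-! The crown graph is `(n - 1)`-regular on `2n` vertices, so its Lanzhou matrix is `a = 2n(n - 1)`
times its adjacency matrix, which after listing one side of the bipartition first is
`[[0, J - I], [J - I, 0]]`. Multiplying the characteristic matrix of `[[0, B], [B, 0]]` by the
unimodular `[[I, 0], [I, I]]` on the left and `[[I, 0], [-I, I]]` on the right makes it block
triangular, so `χ([[0, B], [B, 0]]) = χ(B) χ(-B)`. For `B = c(J - I)`, `B + cI = cJ` has rank one,
giving `χ(B) = (X + c)^(n-1) (X - c(n - 1))`. With `c = ±a` this is the claimed spectrum, and the
inertia is read off from the signs, since `a > 0` once `n ≥ 2`. -/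

open Polynomial

namespace Matrix

variable {R : Type*} [CommRing R] {m : Type*} [Fintype m] [DecidableEq m]

theorem charpoly_fromBlocks_zero_self (B : Matrix m m R) :
    (fromBlocks 0 B B 0).charpoly = B.charpoly * (-B).charpoly := by
  set L : Matrix (m ⊕ m) (m ⊕ m) R[X] := fromBlocks 1 0 1 1
  set U : Matrix (m ⊕ m) (m ⊕ m) R[X] := fromBlocks 1 0 (-1) 1
  have hL : L.det = 1 := by simp [L]
  have hU : U.det = 1 := by simp [U]
  have hblock : L * charmatrix (fromBlocks 0 B B 0) * U =
      fromBlocks (charmatrix (-B)) (-B.map C) 0 (charmatrix B) := by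
    rw [charmatrix_fromBlocks, fromBlocks_multiply, fromBlocks_multiply]
    simp only [charmatrix, RingHom.mapMatrix_apply, Matrix.map_zero _ C_0, sub_zero,
      Matrix.one_mul, Matrix.zero_mul, Matrix.mul_one, Matrix.mul_zero, Matrix.mul_neg, add_zero,
      zero_add]
    rw [Matrix.map_neg _ fun _ => C_neg]
    congr 1 <;> abel
  calc (fromBlocks 0 B B 0).charpoly
      = (L * charmatrix (fromBlocks 0 B B 0) * U).det := by simp [charpoly, det_mul, hL, hU]
    _ = (-B).charpoly * B.charpoly := by rw [hblock, det_fromBlocks_zero₂₁]; rfl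
    _ = B.charpoly * (-B).charpoly := mul_comm _ _

theorem charpoly_smul_of_one_sub_one [Nonempty m] (c : R) :
    (c • (of 1 - 1 : Matrix m m R)).charpoly
      = (X + C c) ^ (Fintype.card m - 1) * (X - C (c * (Fintype.card m - 1))) := by
  have hrank_one : c • (of 1 - 1 : Matrix m m R) = vecMulVec (fun _ => c) 1 - scalar m c := by
    rw [smul_sub, smul_one_eq_diagonal]
    congr 1
  rw [hrank_one, charpoly_sub_scalar, charpoly_vecMulVec]
  obtain ⟨k, hk⟩ : ∃ k, Fintype.card m = k + 1 := Nat.exists_eq_add_one.mpr Fintype.card_pos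
  simp [hk, dotProduct, smul_eq_C_mul, pow_succ]
  ring

variable [IsDomain R]

theorem roots_charpoly_fromBlocks_zero_self (B : Matrix m m R) :
    (fromBlocks 0 B B 0).charpoly.roots = B.charpoly.roots + (-B).charpoly.roots := by
  rw [charpoly_fromBlocks_zero_self, roots_mul (B.charpoly_monic.mul (-B).charpoly_monic).ne_zero]

theorem roots_charpoly_smul_of_one_sub_one [Nonempty m] (c : R) :
    (c • (of 1 - 1 : Matrix m m R)).charpoly.roots
      = Multiset.replicate (Fintype.card m - 1) (-c) + {c * (Fintype.card m - 1)} := by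
  rw [charpoly_smul_of_one_sub_one, roots_mul, roots_pow, roots_X_add_C, roots_X_sub_C,
    Multiset.nsmul_singleton]
  exact mul_ne_zero (pow_ne_zero _ (X_add_C_ne_zero c)) (X_sub_C_ne_zero _)

namespace IsHermitian

variable {A : Matrix m m ℝ} (hA : A.IsHermitian)

theorem map_eigenvalues_univ : Multiset.map hA.eigenvalues univ.val = A.charpoly.roots := by
  simp [hA.roots_charpoly_eq_eigenvalues]

theorem card_filter_eigenvalues (p : ℝ → Prop) [DecidablePred p] :
    #{i | p (hA.eigenvalues i)} = (Multiset.map hA.eigenvalues univ.val).countP p := by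
  rw [Multiset.countP_map]
  rfl

end IsHermitian

end Matrix

theorem Multiset.countP_replicate {α : Type*} (p : α → Prop) [DecidablePred p] (k : ℕ) (x : α) :
    (replicate k x).countP p = if p x then k else 0 := by
  rw [← coe_replicate, coe_countP, List.countP_replicate]
  simp

theorem lanzhouMatrix_eq_smul_adjMatrix {V : Type*} [Fintype V] {G : SimpleGraph V}
    [DecidableRel G.Adj] {d : ℕ} (hG : G.IsRegularOfDegree d) :
    lanzhouMatrix G = (2 * d * (Fintype.card V - 1 - d) : ℝ) • G.adjMatrix ℝ := by
  ext u v
  by_cases huv : G.Adj u v <;> simp [lanzhouMatrix, huv, hG u, hG v]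
  ring

theorem crownGraph_isRegularOfDegree (n : ℕ) : (crownGraph n).IsRegularOfDegree (n - 1) := by
  intro x
  have hnbrs : (crownGraph n).neighborFinset x = ({x.1}ᶜ : Finset (Fin n)) ×ˢ {x.2}ᶜ := by
    ext y
    rw [SimpleGraph.mem_neighborFinset]
    simp [crownGraph, eq_comm, and_comm]
  rw [← SimpleGraph.card_neighborFinset_eq_degree, hnbrs, card_product, card_compl, card_compl]
  simp

theorem lanzhouMatrix_crownGraph {n : ℕ} (hn : n ≠ 0) :
    lanzhouMatrix (crownGraph n) = (2 * n * (n - 1) : ℝ) • (crownGraph n).adjMatrix ℝ := by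
  rw [lanzhouMatrix_eq_smul_adjMatrix (crownGraph_isRegularOfDegree n)]
  congr 1
  simp [Nat.cast_sub (Nat.one_le_iff_ne_zero.mpr hn)]
  ring

def crownEquiv (n : ℕ) : Fin n ⊕ Fin n ≃ Fin n × Fin 2 :=
  (Equiv.boolProdEquivSum (Fin n)).symm.trans
    ((finTwoEquiv.symm.prodCongr (Equiv.refl _)).trans (Equiv.prodComm _ _))

theorem adjMatrix_crownGraph_submatrix (α : Type*) [AddGroupWithOne α] (n : ℕ) :
    ((crownGraph n).adjMatrix α).submatrix (crownEquiv n) (crownEquiv n)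
      = fromBlocks 0 (of 1 - 1) (of 1 - 1) 0 := by
  ext (i | i) (j | j) <;>
    simp [crownEquiv, crownGraph, SimpleGraph.adjMatrix_apply, one_apply, sub_ite]

theorem roots_charpoly_lanzhouMatrix_crownGraph (n : ℕ) [NeZero n] :
    (lanzhouMatrix (crownGraph n)).charpoly.roots
      = Multiset.replicate (n - 1) (-(2 * n * (n - 1) : ℝ)) + {2 * n * (n - 1) * ((n : ℝ) - 1)}
        + (Multiset.replicate (n - 1) (2 * n * (n - 1) : ℝ)
          + {-(2 * n * (n - 1) * ((n : ℝ) - 1))}) := by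
  rw [lanzhouMatrix_crownGraph (NeZero.ne n), ← charpoly_reindex (crownEquiv n).symm,
    reindex_apply, Equiv.symm_symm, submatrix_smul, Pi.smul_apply, Pi.smul_apply,
    adjMatrix_crownGraph_submatrix ℝ, fromBlocks_smul, smul_zero,
    roots_charpoly_fromBlocks_zero_self, ← neg_smul, roots_charpoly_smul_of_one_sub_one,
    roots_charpoly_smul_of_one_sub_one, Fintype.card_fin, neg_neg, neg_mul]

/-- the Lanzhou spectrum of the crown graph S_n^0 is
{a(n-1)^1, a^{n-1}, (-a)^{n-1}, (-a(n-1))^1} with a = 2n(n-1); the inertia is (n, n, 0). -/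
theorem lanzhou_spectrum_crown (n : ℕ) (hn : 2 ≤ n) :
    (Multiset.map (lanzhouMatrix_isHermitian (crownGraph n)).eigenvalues Finset.univ.val
      = Multiset.replicate 1 ((2 * (n : ℝ) * ((n : ℝ) - 1)) * ((n : ℝ) - 1))
        + Multiset.replicate (n - 1) (2 * (n : ℝ) * ((n : ℝ) - 1))
        + Multiset.replicate (n - 1) (-(2 * (n : ℝ) * ((n : ℝ) - 1)))
        + Multiset.replicate 1 (-((2 * (n : ℝ) * ((n : ℝ) - 1)) * ((n : ℝ) - 1))))
    ∧ (univ.filter fun i => 0 < (lanzhouMatrix_isHermitian (crownGraph n)).eigenvalues i).card = n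
    ∧ (univ.filter fun i => (lanzhouMatrix_isHermitian (crownGraph n)).eigenvalues i < 0).card = n
    ∧ (univ.filter fun i => (lanzhouMatrix_isHermitian (crownGraph n)).eigenvalues i = 0).card = 0 := by
  have : NeZero n := ⟨by omega⟩
  set hA := lanzhouMatrix_isHermitian (crownGraph n)
  set a : ℝ := 2 * n * (n - 1)
  have hn1 : (0 : ℝ) < n - 1 := by
    have : (2 : ℝ) ≤ n := by exact_mod_cast hn
    linarith
  have ha : 0 < a := mul_pos (by positivity) hn1
  have ha' : 0 < a * (n - 1) := mul_pos ha hn1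
  have hspec : Multiset.map hA.eigenvalues univ.val
      = Multiset.replicate 1 (a * (n - 1)) + Multiset.replicate (n - 1) a
        + Multiset.replicate (n - 1) (-a) + Multiset.replicate 1 (-(a * (n - 1))) := by
    rw [hA.map_eigenvalues_univ, roots_charpoly_lanzhouMatrix_crownGraph, Multiset.replicate_one,
      Multiset.replicate_one]
    abel
  refine ⟨hspec, ?_, ?_, ?_⟩
  · rw [hA.card_filter_eigenvalues (0 < ·), hspec]
    simp only [Multiset.countP_add, Multiset.countP_replicate]
    simp [ha, ha', ha.not_gt, ha'.not_gt]
    omega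
  · rw [hA.card_filter_eigenvalues (· < 0), hspec]
    simp only [Multiset.countP_add, Multiset.countP_replicate]
    simp [ha, ha', ha.not_gt, ha'.not_gt]
    omega
  · rw [hA.card_filter_eigenvalues (· = 0), hspec]
    simp only [Multiset.countP_add, Multiset.countP_replicate]
    simp [ha.ne', ha'.ne']
end
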